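/- Fix constants T > 0, σ ≥ 0, q ≥ 0, g₀ > 0, m_e > 0, 0 < u_min ≤ u_max with T·u_min ≥ σ, and t_f > 0. Let r, v : [0,t_f] → ℝ³ and m : [0,t_f] → ℝ be absolutely continuous and u : [0,t_f] → ℝ³ measurable, satisfying for almost every t: r' = v, v' = (T − σ/‖u‖)·u/m − g₀·e_z, m' = −q·‖u‖; and for all t: m(t) ≥ m_e and u_min ≤ ‖u(t)‖ ≤ u_max. Assume there exist a constant p_r ∈ ℝ³ and absolutely continuous functions p_v : [0,t_f] → ℝ³ and p_m : [0,t_f] → ℝ such that for almost every t: p_v'(t) = −p_r, p_m'(t) = (1/m(t)²)·(T − σ/‖u(t)‖)·⟨p_v(t), u(t)⟩, and the maximization condition (1/m(t))·(T − σ/‖u(t)‖)·⟨p_v(t), u(t)⟩ − p_m(t)·q·‖u(t)‖ ≥ (1/m(t))·(T − σ/‖w‖)·⟨p_v(t), w⟩ − p_m(t)·q·‖w‖ for all w ∈ ℝ³ with u_min ≤ ‖w‖ ≤ u_max. Define the switching function Ψ(t) = (T/m(t))·‖p_v(t)‖ − p_m(t)·q. Then there exist 0 ≤ t₁ ≤ t₂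 ≤ t_f such that ‖u(t)‖ = u_max for almost every t ∈ [0,t₁) ∪ (t₂,t_f], and for almost every t ∈ (t₁,t₂) either ‖u(t)‖ = u_min or Ψ(t) = 0. -/

import Mathlib

open RealInnerProductSpace MeasureTheory Set

/-- The vertical unit vector `e_z = (0,0,1)`. -/
noncomputable def ez : EuclideanSpace ℝ (Fin 3) := WithLp.toLp 2 ![0, 0, 1]

open scoped Classical in
/-- Right derivative of `s ↦ ‖A - s • B‖`. -/
noncomputable def phiD (A B : EuclideanSpace ℝ (Fin 3)) (s : ℝ) : ℝ :=
  if A - s • B = 0 then ‖B‖ else -⟪B, A - s • B⟫ / ‖A - s • B‖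

lemma phiD_subgrad (A B : EuclideanSpace ℝ (Fin 3)) (s t : ℝ) :
    ‖A - s • B‖ + (t - s) * phiD A B s ≤ ‖A - t • B‖ := by
  by_cases h : A - s • B = 0
  · have hA : A = s • B := by rwa [sub_eq_zero] at h
    have h2 : A - t • B = (s - t) • B := by rw [hA, ← sub_smul]
    rw [phiD, if_pos h, h, h2, norm_smul, norm_zero, Real.norm_eq_abs]
    have : t - s ≤ |s - t| := by rw [abs_sub_comm]; exact le_abs_self _
    nlinarith [norm_nonneg B]
  · have ha : 0 < ‖A - s • B‖ := norm_pos_iff.2 h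
    have key : ⟪A - t • B, A - s • B⟫ ≤ ‖A - t • B‖ * ‖A - s • B‖ :=
      real_inner_le_norm _ _
    have hexp : ⟪A - t • B, A - s • B⟫
        = ‖A - s • B‖ ^ 2 + (s - t) * ⟪B, A - s • B⟫ := by
      have : A - t • B = (A - s • B) + (s - t) • B := by module
      rw [this, inner_add_left, real_inner_smul_left, real_inner_self_eq_norm_sq]
    rw [phiD, if_neg h]
    have h2 : (‖A - s • B‖ + (t - s) * (-⟪B, A - s • B⟫ / ‖A - s • B‖)) * ‖A - s • B‖
        = ‖A - s • B‖ ^ 2 + (s - t) * ⟪B, A - s • B⟫ := by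
      field_simp; ring
    nlinarith [key, hexp, ha]

lemma phiD_mono (A B : EuclideanSpace ℝ (Fin 3)) : Monotone (phiD A B) := by
  intro s t hst
  rcases eq_or_lt_of_le hst with rfl | h
  · exact le_refl _
  · have h1 := phiD_subgrad A B s t
    have h2 := phiD_subgrad A B t s
    nlinarith [h1, h2]

lemma phiD_abs_le (A B : EuclideanSpace ℝ (Fin 3)) (s : ℝ) : |phiD A B s| ≤ ‖B‖ := by
  rw [phiD]
  split_ifs with h
  · simp
  · have ha : 0 < ‖A - s • B‖ := norm_pos_iff.2 h
    rw [abs_div, abs_neg, abs_norm, div_le_iff₀ ha]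
    exact abs_real_inner_le_norm _ _

lemma phi_hasDerivWithinAt (A B : EuclideanSpace ℝ (Fin 3)) (t : ℝ) :
    HasDerivWithinAt (fun s : ℝ => ‖A - s • B‖) (phiD A B t) (Set.Ioi t) t := by
  by_cases h : A - t • B = 0
  · have hA : A = t • B := by rwa [sub_eq_zero] at h
    rw [phiD, if_pos h]
    have hlin : HasDerivWithinAt (fun s : ℝ => (s - t) * ‖B‖) ‖B‖ (Set.Ioi t) t := by
      simpa using (((hasDerivAt_id t).sub_const t).mul_const ‖B‖).hasDerivWithinAt
    apply hlin.congr
    · intro x hx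
      have : A - x • B = (t - x) • B := by rw [hA, ← sub_smul]
      rw [this, norm_smul, Real.norm_eq_abs, abs_of_nonpos (by linarith [Set.mem_Ioi.1 hx])]
      ring
    · simp [hA, ← sub_smul]
  · have ha : 0 < ‖A - t • B‖ := norm_pos_iff.2 h
    have hQx : ∀ x : ℝ, ⟪A - x • B, A - x • B⟫ = ‖A‖ ^ 2 - 2 * x * ⟪A, B⟫ + x ^ 2 * ‖B‖ ^ 2 := by
      intro x
      simp only [inner_sub_left, inner_sub_right, real_inner_smul_left, real_inner_smul_right,
        real_inner_self_eq_norm_sq, real_inner_comm A B, norm_smul, Real.norm_eq_abs,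
        mul_pow, sq_abs]
      ring
    have hfun : (fun s : ℝ => ‖A - s • B‖)
        = fun s : ℝ => Real.sqrt (‖A‖ ^ 2 - 2 * s * ⟪A, B⟫ + s ^ 2 * ‖B‖ ^ 2) := by
      funext s
      rw [norm_eq_sqrt_real_inner, hQx s]
    have hQt : ‖A‖ ^ 2 - 2 * t * ⟪A, B⟫ + t ^ 2 * ‖B‖ ^ 2 = ‖A - t • B‖ ^ 2 := by
      rw [← hQx t, real_inner_self_eq_norm_sq]
    have hQpos : 0 < ‖A‖ ^ 2 - 2 * t * ⟪A, B⟫ + t ^ 2 * ‖B‖ ^ 2 := by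
      rw [hQt]; positivity
    have hpoly : HasDerivAt (fun x : ℝ => ‖A‖ ^ 2 - 2 * x * ⟪A, B⟫ + x ^ 2 * ‖B‖ ^ 2)
        (-2 * ⟪A, B⟫ + 2 * t * ‖B‖ ^ 2) t := by
      have hb : HasDerivAt (fun x : ℝ => x ^ 2 * ‖B‖ ^ 2) (2 * t * ‖B‖ ^ 2) t := by
        simpa using (hasDerivAt_pow 2 t).mul_const (‖B‖ ^ 2)
      have hc : HasDerivAt (fun x : ℝ => 2 * x * ⟪A, B⟫) (2 * ⟪A, B⟫) t := by
        simpa using (((hasDerivAt_id t).const_mul 2).mul_const ⟪A, B⟫)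
      exact (((hasDerivAt_const t (‖A‖ ^ 2)).sub hc).add hb).congr_deriv (by ring)
    have hsq := (Real.hasDerivAt_sqrt (ne_of_gt hQpos)).comp t hpoly
    rw [hfun]
    have hval : (-2 * ⟪A, B⟫ + 2 * t * ‖B‖ ^ 2) / (2 * Real.sqrt (‖A‖ ^ 2 - 2 * t * ⟪A, B⟫ + t ^ 2 * ‖B‖ ^ 2))
        = phiD A B t := by
      have hs : Real.sqrt (‖A‖ ^ 2 - 2 * t * ⟪A, B⟫ + t ^ 2 * ‖B‖ ^ 2) = ‖A - t • B‖ := by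
        rw [hQt, Real.sqrt_sq (norm_nonneg _)]
      rw [hs, phiD, if_neg h]
      have hiB : ⟪B, A - t • B⟫ = ⟪A, B⟫ - t * ‖B‖ ^ 2 := by
        rw [inner_sub_right, real_inner_smul_right, real_inner_self_eq_norm_sq,
          real_inner_comm]
      rw [hiB]
      field_simp
      ring
    rw [← hval]
    exact (by simpa [Function.comp_def, div_eq_mul_inv, mul_comm] using hsq : HasDerivAt _ _ t).hasDerivWithinAt

lemma gstep (T q σ umax s t Ms Mt Ds Dt ps pt : ℝ)
    (hT : 0 ≤ T) (hq : 0 ≤ q) (hσ : 0 ≤ σ) (hst : s ≤ t)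
    (hM : Mt - Ms = -(q * umax) * (t - s)) (hMt : 0 < Mt)
    (hD : Ds ≤ Dt) (hsub : ps + (t - s) * Ds ≤ pt) (hp : 0 ≤ pt)
    (hσm : σ ≤ T * umax)
    (hg : 0 ≤ T * Ms * Ds + q * σ * ps) : 0 ≤ T * Mt * Dt + q * σ * pt := by
  rcases le_or_gt Ds 0 with h | h
  · have H1 : 0 ≤ T * Mt * (Dt - Ds) := mul_nonneg (mul_nonneg hT hMt.le) (sub_nonneg.2 hD)
    have H2 : 0 ≤ q * σ * (pt - (ps + (t - s) * Ds)) :=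
      mul_nonneg (mul_nonneg hq hσ) (by linarith)
    have H3 : 0 ≤ q * (t - s) * (-Ds) * (T * umax - σ) :=
      mul_nonneg (mul_nonneg (mul_nonneg hq (sub_nonneg.2 hst)) (neg_nonneg.2 h)) (sub_nonneg.2 hσm)
    have hMM : T * (Mt - Ms) * Ds = -(T * (q * umax) * (t - s)) * Ds := by rw [hM]; ring
    nlinarith [H1, H2, H3, hMM, hg]
  · nlinarith [mul_nonneg (mul_nonneg hq hσ) hp, mul_nonneg (mul_nonneg hT hMt.le) (sub_nonneg.2 hD),
      mul_nonneg (mul_nonneg hT hMt.le) h.le]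

lemma ctrl_law (T σ q u_min u_max : ℝ) (hT : 0 < T) (hσ : 0 ≤ σ)
    (humin : 0 < u_min) (huminmax : u_min ≤ u_max) (hnet : σ ≤ T * u_min)
    (mt pm : ℝ) (hmt : 0 < mt) (pv ut : EuclideanSpace ℝ (Fin 3))
    (hρ1 : u_min ≤ ‖ut‖) (hρ2 : ‖ut‖ ≤ u_max)
    (HM : ∀ w : EuclideanSpace ℝ (Fin 3), u_min ≤ ‖w‖ → ‖w‖ ≤ u_max →
      (1 / mt) * (T - σ / ‖w‖) * ⟪pv, w⟫ - pm * q * ‖w‖ ≤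
      (1 / mt) * (T - σ / ‖ut‖) * ⟪pv, ut⟫ - pm * q * ‖ut‖) :
    (0 < T * ‖pv‖ / mt - pm * q → ‖ut‖ = u_max ∧
      (T * u_max - σ) * ⟪pv, ut⟫ = (T * u_max - σ) * (‖pv‖ * u_max)) ∧
    (T * ‖pv‖ / mt - pm * q < 0 → ‖ut‖ = u_min) := by
  have hρ0 : 0 < ‖ut‖ := lt_of_lt_of_le humin hρ1
  have hum0 : 0 < u_max := lt_of_lt_of_le humin huminmax
  have hm0 : mt ≠ 0 := ne_of_gt hmt
  have hcoeff : 0 ≤ T - σ / ‖ut‖ := by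
    have : σ / ‖ut‖ ≤ T := by rw [div_le_iff₀ hρ0]; nlinarith
    linarith
  obtain ⟨Ψ, hΨ⟩ : ∃ x : ℝ, x = T * ‖pv‖ / mt - pm * q := ⟨_, rfl⟩
  have hupper : (1 / mt) * (T - σ / ‖ut‖) * ⟪pv, ut⟫ - pm * q * ‖ut‖
      ≤ ‖ut‖ * Ψ - σ * ‖pv‖ / mt := by
    have hCS : ⟪pv, ut⟫ ≤ ‖pv‖ * ‖ut‖ := real_inner_le_norm _ _
    have h1 : (1 / mt) * (T - σ / ‖ut‖) * ⟪pv, ut⟫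
        ≤ (1 / mt) * (T - σ / ‖ut‖) * (‖pv‖ * ‖ut‖) := by
      apply mul_le_mul_of_nonneg_left hCS
      positivity
    have h2 : (1 / mt) * (T - σ / ‖ut‖) * (‖pv‖ * ‖ut‖) - pm * q * ‖ut‖
        = ‖ut‖ * Ψ - σ * ‖pv‖ / mt := by
      rw [hΨ]; field_simp; ring
    linarith
  have hlow : ∀ c : ℝ, u_min ≤ c → c ≤ u_max →
      c * Ψ - σ * ‖pv‖ / mt ≤ (1 / mt) * (T - σ / ‖ut‖) * ⟪pv, ut⟫ - pm * q * ‖ut‖ := by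
    intro c hc1 hc2
    have hc0 : 0 < c := lt_of_lt_of_le humin hc1
    by_cases hpv : pv = 0
    · have hnpv : ‖pv‖ = (0 : ℝ) := by rw [hpv, norm_zero]
      have hw : ‖c • EuclideanSpace.single (0 : Fin 3) (1 : ℝ)‖ = c := by
        rw [norm_smul, EuclideanSpace.norm_single, Real.norm_eq_abs, abs_of_pos hc0,
          norm_one, mul_one]
      have hHM := HM (c • EuclideanSpace.single (0 : Fin 3) (1 : ℝ))
        (by rw [hw]; exact hc1) (by rw [hw]; exact hc2)
      rw [hw] at hHM
      have h0 : (1 / mt) * (T - σ / c) * ⟪pv, c • EuclideanSpace.single (0 : Fin 3) (1 : ℝ)⟫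
          = 0 := by rw [hpv, inner_zero_left, mul_zero]
      have hL : c * Ψ - σ * ‖pv‖ / mt = 0 - pm * q * c := by
        rw [hΨ, hnpv]; ring
      rw [hL]
      linarith [hHM, h0]
    · have hφ : 0 < ‖pv‖ := norm_pos_iff.2 hpv
      have hw : ‖(c / ‖pv‖) • pv‖ = c := by
        rw [norm_smul, Real.norm_eq_abs, abs_of_pos (by positivity),
          div_mul_cancel₀ _ (ne_of_gt hφ)]
      have hiw : ⟪pv, (c / ‖pv‖) • pv⟫ = c * ‖pv‖ := by
        rw [real_inner_smul_right, real_inner_self_eq_norm_sq]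
        field_simp
      have hHM := HM ((c / ‖pv‖) • pv) (by rw [hw]; exact hc1) (by rw [hw]; exact hc2)
      rw [hw, hiw] at hHM
      have hL : c * Ψ - σ * ‖pv‖ / mt = (1 / mt) * (T - σ / c) * (c * ‖pv‖) - pm * q * c := by
        rw [hΨ]; field_simp; ring
      rw [hL]
      exact hHM
  rw [← hΨ]
  constructor
  · intro hΨpos
    have h1 := hlow u_max huminmax (le_refl _)
    have h2 : u_max * Ψ ≤ ‖ut‖ * Ψ := by linarith
    have hmaxeq : ‖ut‖ = u_max := le_antisymm hρ2 (by nlinarith)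
    refine ⟨hmaxeq, ?_⟩
    have heq : (1 / mt) * (T - σ / ‖ut‖) * ⟪pv, ut⟫ - pm * q * ‖ut‖
        = ‖ut‖ * Ψ - σ * ‖pv‖ / mt := by
      apply le_antisymm hupper
      conv_lhs => rw [hmaxeq]
      exact h1
    rw [hmaxeq] at heq
    have hu0 : u_max ≠ 0 := ne_of_gt hum0
    have key : (T * u_max - σ) * ⟪pv, ut⟫ - (T * u_max - σ) * (‖pv‖ * u_max)
        = (mt * u_max) * (((1 / mt) * (T - σ / u_max) * ⟪pv, ut⟫ - pm * q * u_max)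
            - (u_max * Ψ - σ * ‖pv‖ / mt)) := by
      rw [hΨ]; field_simp; ring
    rw [heq, sub_self, mul_zero] at key
    linarith
  · intro hΨneg
    have h1 := hlow u_min (le_refl _) huminmax
    have h2 : u_min * Ψ ≤ ‖ut‖ * Ψ := by linarith
    exact le_antisymm (by nlinarith) hρ1


open Topology Filter

set_option maxHeartbeats 4000000



open RealInnerProductSpace MeasureTheory

/-- Max-Min-Max / Max-Singular-Max structure of the optimal control for the planetary
landing problem with constant atmospheric pressure `σ`, under the conditions furnished
by the Pontryagin Maximum Principle (no state or pointing constraint, so the adjoint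
`p_r` is constant and the measure term vanishes). -/
theorem stmt17 (T σ q g₀ m_e u_min u_max t_f : ℝ)
    (hT : 0 < T) (hσ : 0 ≤ σ) (hq : 0 ≤ q) (hg₀ : 0 < g₀) (hme : 0 < m_e)
    (humin : 0 < u_min) (huminmax : u_min ≤ u_max) (hnet : T * u_min ≥ σ)
    (htf : 0 < t_f)
    (r v : ℝ → EuclideanSpace ℝ (Fin 3)) (m : ℝ → ℝ)
    (u : ℝ → EuclideanSpace ℝ (Fin 3)) (hu_meas : Measurable u)
    -- dynamics: r' = v, v' = (T − σ/‖u‖) u/m − g₀ e_z, m' = −q ‖u‖ (absolutely continuous)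
    (hr : ∀ t ∈ Set.Icc (0:ℝ) t_f, r t = r 0 + ∫ s in (0:ℝ)..t, v s)
    (hv : ∀ t ∈ Set.Icc (0:ℝ) t_f,
      v t = v 0 + ∫ s in (0:ℝ)..t, (((T - σ / ‖u s‖) / m s) • u s - g₀ • ez))
    (hmdyn : ∀ t ∈ Set.Icc (0:ℝ) t_f, m t = m 0 + ∫ s in (0:ℝ)..t, -(q * ‖u s‖))
    -- pointwise constraints
    (hm : ∀ t ∈ Set.Icc (0:ℝ) t_f, m_e ≤ m t)
    (humin' : ∀ t ∈ Set.Icc (0:ℝ) t_f, u_min ≤ ‖u t‖)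
    (humax' : ∀ t ∈ Set.Icc (0:ℝ) t_f, ‖u t‖ ≤ u_max)
    -- adjoint data from the Pontryagin Maximum Principle: p_v' = −p_r (p_r constant),
    -- p_m' = (1/m²)(T − σ/‖u‖) ⟨p_v, u⟩
    (p_r : EuclideanSpace ℝ (Fin 3)) (p_v : ℝ → EuclideanSpace ℝ (Fin 3)) (p_m : ℝ → ℝ)
    (hpv : ∀ t ∈ Set.Icc (0:ℝ) t_f, p_v t = p_v 0 - t • p_r)
    (hpm : ∀ t ∈ Set.Icc (0:ℝ) t_f,
      p_m t = p_m 0 + ∫ s in (0:ℝ)..t, (1 / (m s) ^ 2) * (T - σ / ‖u s‖) * ⟪p_v s, u s⟫)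
    -- maximization condition
    (hmax : ∀ᵐ t ∂volume, t ∈ Set.Icc (0:ℝ) t_f →
      ∀ w : EuclideanSpace ℝ (Fin 3), u_min ≤ ‖w‖ → ‖w‖ ≤ u_max →
        (1 / m t) * (T - σ / ‖w‖) * ⟪p_v t, w⟫ - p_m t * q * ‖w‖ ≤
        (1 / m t) * (T - σ / ‖u t‖) * ⟪p_v t, u t⟫ - p_m t * q * ‖u t‖) :
    -- conclusion: Max-Min-Max or Max-Singular-Max structure
    ∃ t₁ t₂ : ℝ, 0 ≤ t₁ ∧ t₁ ≤ t₂ ∧ t₂ ≤ t_f ∧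
      (∀ᵐ t ∂volume, t ∈ Set.Icc (0:ℝ) t_f → (t < t₁ ∨ t₂ < t) → ‖u t‖ = u_max) ∧
      (∀ᵐ t ∂volume, t ∈ Set.Ioo t₁ t₂ →
        (‖u t‖ = u_min ∨ (T / m t) * ‖p_v t‖ - p_m t * q = 0)) := by
  classical
  have hum0 : 0 < u_max := lt_of_lt_of_le humin huminmax
  have hnetmax : σ ≤ T * u_max := by nlinarith
  have hmpos : ∀ t ∈ Set.Icc (0:ℝ) t_f, 0 < m t := fun t ht => lt_of_lt_of_le hme (hm t ht)
  -- integrability of the mass-flow integrand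
  have hν_int : IntegrableOn (fun s => -(q * ‖u s‖)) (Set.Icc (0:ℝ) t_f) := by
    refine Integrable.mono' (integrable_const (q * u_max))
      ((measurable_const.mul hu_meas.norm).neg).aestronglyMeasurable ?_
    refine (ae_restrict_iff' measurableSet_Icc).2 (Filter.Eventually.of_forall fun s hs => ?_)
    have h2 := humax' s hs
    have h0 : (0:ℝ) ≤ q * ‖u s‖ := by positivity
    rw [norm_neg, Real.norm_eq_abs, abs_of_nonneg h0]
    exact mul_le_mul_of_nonneg_left h2 hq
  have hmc : ContinuousOn m (Set.Icc (0:ℝ) t_f) := by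
    refine ContinuousOn.congr (continuousOn_const.add ?_) (fun t ht => hmdyn t ht)
    have := intervalIntegral.continuousOn_primitive_interval (a := (0:ℝ)) (b := t_f)
      (μ := volume) (f := fun s => -(q * ‖u s‖)) (by rwa [Set.uIcc_of_le htf.le])
    rwa [Set.uIcc_of_le htf.le] at this
  have hC3 : ∀ s ∈ Set.Icc (0:ℝ) t_f, ‖p_v 0 - s • p_r‖ ≤ ‖p_v 0‖ + t_f * ‖p_r‖ := by
    intro s hs
    calc ‖p_v 0 - s • p_r‖ ≤ ‖p_v 0‖ + ‖s • p_r‖ := norm_sub_le _ _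
      _ = ‖p_v 0‖ + |s| * ‖p_r‖ := by rw [norm_smul, Real.norm_eq_abs]
      _ ≤ ‖p_v 0‖ + t_f * ‖p_r‖ := by
          have h1 : |s| ≤ t_f := by rw [abs_of_nonneg hs.1]; exact hs.2
          nlinarith [norm_nonneg p_r]
  -- integrability of the p_m integrand
  have hfint : IntegrableOn
      (fun s => (1 / (m s) ^ 2) * (T - σ / ‖u s‖) * ⟪p_v s, u s⟫) (Set.Icc (0:ℝ) t_f) := by
    have hfE : IntegrableOn
        (fun s => (1 / (m s) ^ 2) * (T - σ / ‖u s‖) * ⟪p_v 0 - s • p_r, u s⟫)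
        (Set.Icc (0:ℝ) t_f) := by
      have hmeas : AEStronglyMeasurable
          (fun s => (1 / (m s) ^ 2) * (T - σ / ‖u s‖) * ⟪p_v 0 - s • p_r, u s⟫)
          (volume.restrict (Set.Icc (0:ℝ) t_f)) := by
        refine AEStronglyMeasurable.mul (AEStronglyMeasurable.mul ?_ ?_) ?_
        · exact (continuousOn_const.div (hmc.pow 2)
            (fun t ht => pow_ne_zero 2 (ne_of_gt (hmpos t ht)))).aestronglyMeasurable
            measurableSet_Icc
        · exact (measurable_const.sub (measurable_const.div hu_meas.norm)).aestronglyMeasurable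
        · exact (Measurable.inner ((continuous_const.sub
            (continuous_id.smul continuous_const)).measurable) hu_meas).aestronglyMeasurable
      refine Integrable.mono' (integrable_const
        ((1 / m_e ^ 2) * (T + σ / u_min) * ((‖p_v 0‖ + t_f * ‖p_r‖) * u_max))) hmeas ?_
      refine (ae_restrict_iff' measurableSet_Icc).2 (Filter.Eventually.of_forall fun s hs => ?_)
      have hms := hmpos s hs
      have hm2 := hm s hs
      have hν1 := humin' s hs
      have hν2 := humax' s hs
      have hb1 : |1 / (m s) ^ 2| ≤ 1 / m_e ^ 2 := by
        rw [abs_of_pos (by positivity)]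
        apply one_div_le_one_div_of_le (by positivity)
        nlinarith
      have hb2 : |T - σ / ‖u s‖| ≤ T + σ / u_min := by
        have h3 : 0 ≤ σ / ‖u s‖ := by positivity
        have h4 : σ / ‖u s‖ ≤ σ / u_min := by
          apply div_le_div_of_nonneg_left hσ humin hν1
        have h5 : 0 ≤ σ / u_min := by positivity
        rw [abs_le]; constructor <;> nlinarith
      have hb3 : |⟪p_v 0 - s • p_r, u s⟫| ≤ (‖p_v 0‖ + t_f * ‖p_r‖) * u_max := by
        calc |⟪p_v 0 - s • p_r, u s⟫| ≤ ‖p_v 0 - s • p_r‖ * ‖u s‖ := abs_real_inner_le_norm _ _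
          _ ≤ (‖p_v 0‖ + t_f * ‖p_r‖) * u_max := by
              apply mul_le_mul (hC3 s hs) hν2 (norm_nonneg _)
              nlinarith [norm_nonneg (p_v 0), norm_nonneg p_r, htf.le]
      rw [Real.norm_eq_abs, abs_mul, abs_mul]
      have h7 : (0:ℝ) ≤ 1 / m_e ^ 2 := by positivity
      have h8 : (0:ℝ) ≤ T + σ / u_min := by positivity
      apply mul_le_mul (mul_le_mul hb1 hb2 (abs_nonneg _) h7) hb3 (abs_nonneg _)
      positivity
    refine hfE.congr ?_
    refine (ae_restrict_iff' measurableSet_Icc).2 (Filter.Eventually.of_forall fun s hs => ?_)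
    simp only [hpv s hs]
  have hpmcont : ContinuousOn p_m (Set.Icc (0:ℝ) t_f) := by
    refine ContinuousOn.congr (continuousOn_const.add ?_) (fun t ht => hpm t ht)
    have := intervalIntegral.continuousOn_primitive_interval (a := (0:ℝ)) (b := t_f)
      (μ := volume)
      (f := fun s => (1 / (m s) ^ 2) * (T - σ / ‖u s‖) * ⟪p_v s, u s⟫)
      (by rwa [Set.uIcc_of_le htf.le])
    rwa [Set.uIcc_of_le htf.le] at this
  -- the switching function
  obtain ⟨Ψ, hΨdef⟩ : ∃ F : ℝ → ℝ, F = fun t => T * ‖p_v 0 - t • p_r‖ / m t - p_m t * q :=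
    ⟨_, rfl⟩
  have hΨt : ∀ s : ℝ, Ψ s = T * ‖p_v 0 - s • p_r‖ / m s - p_m s * q := fun s => by
    simp only [hΨdef]
  have hΨeq : ∀ t ∈ Set.Icc (0:ℝ) t_f, (T / m t) * ‖p_v t‖ - p_m t * q = Ψ t := by
    intro t ht; rw [hΨt t, hpv t ht]; ring
  have hΨcont : ContinuousOn Ψ (Set.Icc (0:ℝ) t_f) := by
    rw [hΨdef]
    apply ContinuousOn.sub
    · exact ContinuousOn.div
        (continuous_const.mul (continuous_const.sub
          (continuous_id.smul continuous_const)).norm).continuousOn hmc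
        (fun t ht => ne_of_gt (hmpos t ht))
    · exact hpmcont.mul continuousOn_const
  -- the a.e. control law
  have hctl : ∀ᵐ t ∂volume, t ∈ Set.Icc (0:ℝ) t_f →
      ((0 < Ψ t → ‖u t‖ = u_max ∧
        (T * u_max - σ) * ⟪p_v t, u t⟫ = (T * u_max - σ) * (‖p_v t‖ * u_max)) ∧
       (Ψ t < 0 → ‖u t‖ = u_min)) := by
    filter_upwards [hmax] with t hmaxt ht
    have hc := ctrl_law T σ q u_min u_max hT hσ humin huminmax hnet (m t) (p_m t)
      (hmpos t ht) (p_v t) (u t) (humin' t ht) (humax' t ht) (hmaxt ht)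
    have hψ : T * ‖p_v t‖ / m t - p_m t * q = Ψ t := by rw [hΨt t, hpv t ht]
    rw [hψ] at hc
    exact hc
  -- a.e. avoidance of single points
  have hptne : ∀ c : ℝ, ∀ᵐ s : ℝ ∂volume, s ≠ c := by
    intro c
    rw [ae_iff]
    simp only [not_not, Set.setOf_eq_eq_singleton]
    exact Real.volume_singleton
  -- THE BUMP LEMMA: Ψ cannot have a positive bump between two zeroes
  have bump : ∀ a b : ℝ, 0 ≤ a → a < b → b ≤ t_f → Ψ a = 0 → Ψ b = 0 →
      (∀ s ∈ Set.Ioo a b, 0 < Ψ s) → False := by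
    intro a b ha0 hab hbf hΨa hΨb hpos
    have hsub : Set.Icc a b ⊆ Set.Icc (0:ℝ) t_f := Set.Icc_subset_Icc ha0 hbf
    have haIcc : a ∈ Set.Icc (0:ℝ) t_f := hsub (Set.left_mem_Icc.2 hab.le)
    -- a.e. control on (a,b)
    have hae : ∀ᵐ s ∂volume, s ∈ Set.Ioo a b → (‖u s‖ = u_max ∧
        (T * u_max - σ) * ⟪p_v s, u s⟫ = (T * u_max - σ) * (‖p_v s‖ * u_max)) := by
      filter_upwards [hctl] with s hs hsab
      exact (hs (hsub (Set.Ioo_subset_Icc_self hsab))).1 (hpos s hsab)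
    -- m is affine on [a,b]
    have hMlin : ∀ t ∈ Set.Icc a b, m t = m a - q * u_max * (t - a) := by
      intro t ht
      have htI : t ∈ Set.Icc (0:ℝ) t_f := hsub ht
      have hi1 : IntervalIntegrable (fun s => -(q * ‖u s‖)) volume 0 t := by
        apply (hν_int.mono_set ?_).intervalIntegrable
        rw [Set.uIcc_of_le htI.1]
        exact Set.Icc_subset_Icc le_rfl htI.2
      have hi2 : IntervalIntegrable (fun s => -(q * ‖u s‖)) volume 0 a := by
        apply (hν_int.mono_set ?_).intervalIntegrable
        rw [Set.uIcc_of_le haIcc.1]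
        exact Set.Icc_subset_Icc le_rfl haIcc.2
      have h1 : m t - m a = ∫ s in a..t, -(q * ‖u s‖) := by
        rw [hmdyn t htI, hmdyn a haIcc, add_sub_add_left_eq_sub]
        exact intervalIntegral.integral_interval_sub_left hi1 hi2
      have h2 : (∫ s in a..t, -(q * ‖u s‖)) = ∫ s in a..t, -(q * u_max) := by
        apply intervalIntegral.integral_congr_ae
        filter_upwards [hae, hptne b] with s hs hsb hmem
        rw [Set.uIoc_of_le ht.1] at hmem
        have hsab : s ∈ Set.Ioo a b := ⟨hmem.1, lt_of_le_of_ne (hmem.2.trans ht.2) hsb⟩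
        rw [(hs hsab).1]
      rw [h2, intervalIntegral.integral_const, smul_eq_mul] at h1
      linarith
    -- abbreviations
    obtain ⟨L, hL⟩ : ∃ L : ℝ → ℝ, L = fun s => m a - q * u_max * (s - a) := ⟨_, rfl⟩
    obtain ⟨φ, hφ⟩ : ∃ φ : ℝ → ℝ, φ = fun s : ℝ => ‖p_v 0 - s • p_r‖ := ⟨_, rfl⟩
    obtain ⟨D, hD⟩ : ∃ D : ℝ → ℝ, D = phiD (p_v 0) p_r := ⟨_, rfl⟩
    have hLs : ∀ s : ℝ, L s = m a - q * u_max * (s - a) := fun s => by simp only [hL]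
    have hφs : ∀ s : ℝ, φ s = ‖p_v 0 - s • p_r‖ := fun s => by simp only [hφ]
    have hφnn : ∀ s : ℝ, 0 ≤ φ s := fun s => by rw [hφs]; exact norm_nonneg _
    have hmL : ∀ s ∈ Set.Icc a b, m s = L s := fun s hs => by
      rw [hLs]; exact hMlin s hs
    have hLpos : ∀ s ∈ Set.Icc a b, 0 < L s := fun s hs => by
      rw [← hmL s hs]; exact hmpos s (hsub hs)
    have hLcont : Continuous L := by
      rw [hL]; fun_prop
    have hφcont : Continuous φ := by
      rw [hφ]
      exact (continuous_const.sub (continuous_id.smul continuous_const)).norm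
    have hDmono : Monotone D := by rw [hD]; exact phiD_mono _ _
    -- interval integrability of the two integrands
    have hGAii : ∀ t ∈ Set.Icc a b, IntervalIntegrable
        (fun s => D s * (T / L s) + φ s * (T * (q * u_max) / (L s) ^ 2)) volume a t := by
      intro t ht
      have huIcc : Set.uIcc a t ⊆ Set.Icc a b := by
        rw [Set.uIcc_of_le ht.1]; exact Set.Icc_subset_Icc le_rfl ht.2
      refine IntervalIntegrable.add ?_ ?_
      · exact hDmono.intervalIntegrable.mul_continuousOn
          ((continuousOn_const.div (hLcont.continuousOn.mono huIcc)
            (fun s hs => ne_of_gt (hLpos s (huIcc hs)))))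
      · exact ((hφcont.continuousOn.mono huIcc).mul
          (continuousOn_const.div ((hLcont.pow 2).continuousOn.mono huIcc)
            (fun s hs => pow_ne_zero 2 (ne_of_gt (hLpos s (huIcc hs)))))).intervalIntegrable
    have hGii : ∀ t ∈ Set.Icc a b, IntervalIntegrable
        (fun s => D s * (T / L s) + φ s * (q * σ / (L s) ^ 2)) volume a t := by
      intro t ht
      have huIcc : Set.uIcc a t ⊆ Set.Icc a b := by
        rw [Set.uIcc_of_le ht.1]; exact Set.Icc_subset_Icc le_rfl ht.2
      refine IntervalIntegrable.add ?_ ?_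
      · exact hDmono.intervalIntegrable.mul_continuousOn
          ((continuousOn_const.div (hLcont.continuousOn.mono huIcc)
            (fun s hs => ne_of_gt (hLpos s (huIcc hs)))))
      · exact ((hφcont.continuousOn.mono huIcc).mul
          (continuousOn_const.div ((hLcont.pow 2).continuousOn.mono huIcc)
            (fun s hs => pow_ne_zero 2 (ne_of_gt (hLpos s (huIcc hs)))))).intervalIntegrable
    have hfBii : ∀ t ∈ Set.Icc a b, IntervalIntegrable
        (fun s => q * (φ s * ((T * u_max - σ) / (L s) ^ 2))) volume a t := by
      intro t ht
      have huIcc : Set.uIcc a t ⊆ Set.Icc a b := by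
        rw [Set.uIcc_of_le ht.1]; exact Set.Icc_subset_Icc le_rfl ht.2
      exact (continuousOn_const.mul ((hφcont.continuousOn.mono huIcc).mul
          (continuousOn_const.div ((hLcont.pow 2).continuousOn.mono huIcc)
            (fun s hs => pow_ne_zero 2 (ne_of_gt (hLpos s (huIcc hs))))))).intervalIntegrable
    -- FTC representation of Ψ on [a,b]
    have hFTC : ∀ t ∈ Set.Icc a b, Ψ t - Ψ a
        = ∫ s in a..t, (D s * (T / L s) + φ s * (q * σ / (L s) ^ 2)) := by
      intro t ht
      have htI : t ∈ Set.Icc (0:ℝ) t_f := hsub ht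
      have hIccab : Set.Icc a t ⊆ Set.Icc a b := Set.Icc_subset_Icc le_rfl ht.2
      -- part A : FTC for T φ / L
      have hcontF : ContinuousOn (fun s => T * φ s / L s) (Set.Icc a t) :=
        ((continuous_const.mul hφcont).continuousOn.mono hIccab).div
          (hLcont.continuousOn.mono hIccab)
          (fun s hs => ne_of_gt (hLpos s (hIccab hs)))
      have hderivF : ∀ x ∈ Set.Ioo a t, HasDerivWithinAt (fun s => T * φ s / L s)
          (D x * (T / L x) + φ x * (T * (q * u_max) / (L x) ^ 2)) (Set.Ioi x) x := by
        intro x hx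
        have hxab : x ∈ Set.Icc a b := hIccab (Set.Ioo_subset_Icc_self hx)
        have h1 : HasDerivWithinAt φ (D x) (Set.Ioi x) x := by
          rw [hφ, hD]; exact phi_hasDerivWithinAt _ _ x
        have h2 : HasDerivWithinAt L (-(q * u_max)) (Set.Ioi x) x := by
          rw [hL]
          have : HasDerivAt (fun s : ℝ => m a - q * u_max * (s - a)) (-(q * u_max)) x := by
            exact ((hasDerivAt_const x (m a)).sub
              (((hasDerivAt_id x).sub_const a).const_mul (q * u_max))).congr_deriv (by ring)
          exact this.hasDerivWithinAt
        have hLx : L x ≠ 0 := ne_of_gt (hLpos x hxab)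
        have h3 := (h1.const_mul T).div h2 hLx
        refine h3.congr_deriv ?_
        field_simp
        ring
      have hA : (∫ s in a..t, (D s * (T / L s) + φ s * (T * (q * u_max) / (L s) ^ 2)))
          = T * φ t / L t - T * φ a / L a :=
        intervalIntegral.integral_eq_sub_of_hasDeriv_right_of_le ht.1 hcontF hderivF
          (hGAii t ht)
      -- part B : the p_m increment
      have hi1 : IntervalIntegrable
          (fun s => (1 / (m s) ^ 2) * (T - σ / ‖u s‖) * ⟪p_v s, u s⟫) volume 0 t := by
        apply (hfint.mono_set ?_).intervalIntegrable
        rw [Set.uIcc_of_le htI.1]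
        exact Set.Icc_subset_Icc le_rfl htI.2
      have hi2 : IntervalIntegrable
          (fun s => (1 / (m s) ^ 2) * (T - σ / ‖u s‖) * ⟪p_v s, u s⟫) volume 0 a := by
        apply (hfint.mono_set ?_).intervalIntegrable
        rw [Set.uIcc_of_le haIcc.1]
        exact Set.Icc_subset_Icc le_rfl haIcc.2
      have hB : p_m t - p_m a = ∫ s in a..t, φ s * ((T * u_max - σ) / (L s) ^ 2) := by
        have h1 : p_m t - p_m a
            = ∫ s in a..t, (1 / (m s) ^ 2) * (T - σ / ‖u s‖) * ⟪p_v s, u s⟫ := by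
          rw [hpm t htI, hpm a haIcc, add_sub_add_left_eq_sub]
          exact intervalIntegral.integral_interval_sub_left hi1 hi2
        rw [h1]
        apply intervalIntegral.integral_congr_ae
        filter_upwards [hae, hptne b] with s hs hsb hmem
        rw [Set.uIoc_of_le ht.1] at hmem
        have hsab : s ∈ Set.Ioo a b := ⟨hmem.1, lt_of_le_of_ne (hmem.2.trans ht.2) hsb⟩
        have hsI : s ∈ Set.Icc (0:ℝ) t_f := hsub (Set.Ioo_subset_Icc_self hsab)
        obtain ⟨hn, hal⟩ := hs hsab
        have hms : m s = L s := hmL s (Set.Ioo_subset_Icc_self hsab)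
        have hLs0 : L s ≠ 0 := ne_of_gt (hLpos s (Set.Ioo_subset_Icc_self hsab))
        have hφps : ‖p_v s‖ = φ s := by rw [hpv s hsI, hφs s]
        rw [hms, hn]
        rcases eq_or_ne (T * u_max - σ) 0 with hc0 | hc0
        · have hT0 : T - σ / u_max = 0 := by
            field_simp [ne_of_gt hum0]
            linarith
          rw [hT0, hc0]
          simp
        · have hXeq : ⟪p_v s, u s⟫ = ‖p_v s‖ * u_max := mul_left_cancel₀ hc0 hal
          rw [hXeq, hφps]
          field_simp [hLs0, ne_of_gt hum0]
      -- combine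
      have hqB : (p_m t - p_m a) * q
          = ∫ s in a..t, q * (φ s * ((T * u_max - σ) / (L s) ^ 2)) := by
        rw [intervalIntegral.integral_const_mul, ← hB]
        ring
      have hsubI := intervalIntegral.integral_sub (hGAii t ht) (hfBii t ht)
      have hcongr : ∫ s in a..t,
          ((D s * (T / L s) + φ s * (T * (q * u_max) / (L s) ^ 2))
            - q * (φ s * ((T * u_max - σ) / (L s) ^ 2)))
          = ∫ s in a..t, (D s * (T / L s) + φ s * (q * σ / (L s) ^ 2)) := by
        apply intervalIntegral.integral_congr
        intro s hs
        rw [Set.uIcc_of_le ht.1] at hs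
        have hLs0 : L s ≠ 0 := ne_of_gt (hLpos s (hIccab hs))
        field_simp
        ring
      have hΨtv : Ψ t = T * φ t / L t - p_m t * q := by
        rw [hΨt t, ← hφs t, ← hmL t ht]
      have hΨav : Ψ a = T * φ a / L a - p_m a * q := by
        rw [hΨt a, ← hφs a, ← hmL a (Set.left_mem_Icc.2 hab.le)]
      have e1 : (∫ s in a..t, (D s * (T / L s) + φ s * (q * σ / (L s) ^ 2)))
          = (T * φ t / L t - T * φ a / L a) - (p_m t - p_m a) * q := by
        rw [← hcongr, hsubI, hA, ← hqB]
      rw [hΨtv, hΨav, e1]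
      ring
    -- case analysis on the sign of g := T L D + q σ φ on (a,b)
    by_cases hex : ∃ s₀ ∈ Set.Ioo a b, 0 < T * L s₀ * D s₀ + q * σ * φ s₀
    · obtain ⟨s₀, hs₀, hg₀⟩ := hex
      have hs₀ab : s₀ ∈ Set.Icc a b := Set.Ioo_subset_Icc_self hs₀
      have hginv : ∀ t ∈ Set.Icc s₀ b, 0 ≤ T * L t * D t + q * σ * φ t := by
        intro t ht
        have htab : t ∈ Set.Icc a b := ⟨hs₀ab.1.trans ht.1, ht.2⟩
        refine gstep T q σ u_max s₀ t (L s₀) (L t) (D s₀) (D t) (φ s₀) (φ t)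
          hT.le hq hσ ht.1 ?_ (hLpos t htab) (hDmono ht.1) ?_ (hφnn t) hnetmax hg₀.le
        · rw [hLs s₀, hLs t]; ring
        · rw [hφs s₀, hφs t, hD]; exact phiD_subgrad _ _ s₀ t
      have hGnn : ∀ s ∈ Set.Icc s₀ b, 0 ≤ D s * (T / L s) + φ s * (q * σ / (L s) ^ 2) := by
        intro s hs
        have hsab : s ∈ Set.Icc a b := ⟨hs₀ab.1.trans hs.1, hs.2⟩
        have h1 := hginv s hs
        have hLp := hLpos s hsab
        have hid : (D s * (T / L s) + φ s * (q * σ / (L s) ^ 2)) * (L s) ^ 2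
            = T * L s * D s + q * σ * φ s := by
          field_simp
        nlinarith [pow_pos hLp 2, h1, hLp, hid]
      have h1 := hFTC b ⟨hab.le, le_refl b⟩
      have h2 := hFTC s₀ hs₀ab
      have h3 : Ψ b - Ψ s₀ = ∫ s in s₀..b,
          (D s * (T / L s) + φ s * (q * σ / (L s) ^ 2)) := by
        have h4 := intervalIntegral.integral_interval_sub_left
          (hGii b ⟨hab.le, le_refl b⟩) (hGii s₀ hs₀ab)
        linarith
      have h5 : 0 ≤ ∫ s in s₀..b, (D s * (T / L s) + φ s * (q * σ / (L s) ^ 2)) :=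
        intervalIntegral.integral_nonneg hs₀.2.le hGnn
      have h6 := hpos s₀ hs₀
      rw [hΨb] at h3
      linarith
    · push_neg at hex
      have hmid : (a + b) / 2 ∈ Set.Ioo a b := ⟨by linarith, by linarith⟩
      have h1 := hFTC ((a + b) / 2) (Set.Ioo_subset_Icc_self hmid)
      have h4 : (∫ s in a..(a + b) / 2, (D s * (T / L s) + φ s * (q * σ / (L s) ^ 2))) ≤ 0 := by
        have h5 : 0 ≤ ∫ s in a..(a + b) / 2,
            -(D s * (T / L s) + φ s * (q * σ / (L s) ^ 2)) := by
          refine intervalIntegral.integral_nonneg_of_ae_restrict (by linarith) ?_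
          refine (ae_restrict_iff' measurableSet_Icc).2 ?_
          filter_upwards [hptne a] with s hsa hsIcc
          simp only [Pi.zero_apply]
          have hsab : s ∈ Set.Ioo a b :=
            ⟨lt_of_le_of_ne hsIcc.1 (Ne.symm hsa), lt_of_le_of_lt hsIcc.2 (by linarith)⟩
          have h6 := hex s hsab
          have hLp := hLpos s (Set.Ioo_subset_Icc_self hsab)
          have hid : (D s * (T / L s) + φ s * (q * σ / (L s) ^ 2)) * (L s) ^ 2
              = T * L s * D s + q * σ * φ s := by
            field_simp
          nlinarith [pow_pos hLp 2, hLp, hid, h6]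
        rw [intervalIntegral.integral_neg] at h5
        linarith
      have h6 := hpos ((a + b) / 2) hmid
      rw [hΨa] at h1
      linarith
  -- global structure
  by_cases hZ : ∃ t ∈ Set.Icc (0:ℝ) t_f, Ψ t ≤ 0
  · -- Z nonempty : t₁ = sInf Z, t₂ = sSup Z
    have hZcl : IsClosed {t | t ∈ Set.Icc (0:ℝ) t_f ∧ Ψ t ≤ 0} := by
      have hset : {t | t ∈ Set.Icc (0:ℝ) t_f ∧ Ψ t ≤ 0}
          = Set.Icc (0:ℝ) t_f ∩ Ψ ⁻¹' Set.Iic 0 := rfl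
      rw [hset]
      exact hΨcont.preimage_isClosed_of_isClosed isClosed_Icc isClosed_Iic
    have hZcp : IsCompact {t | t ∈ Set.Icc (0:ℝ) t_f ∧ Ψ t ≤ 0} :=
      IsCompact.of_isClosed_subset isCompact_Icc hZcl (fun t ht => ht.1)
    obtain ⟨z, hz1, hz2⟩ := hZ
    have hZne : {t | t ∈ Set.Icc (0:ℝ) t_f ∧ Ψ t ≤ 0}.Nonempty := ⟨z, hz1, hz2⟩
    have hbddB : BddBelow {t | t ∈ Set.Icc (0:ℝ) t_f ∧ Ψ t ≤ 0} := hZcp.bddBelow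
    have hbddA : BddAbove {t | t ∈ Set.Icc (0:ℝ) t_f ∧ Ψ t ≤ 0} := hZcp.bddAbove
    have ht₁Z : sInf {t | t ∈ Set.Icc (0:ℝ) t_f ∧ Ψ t ≤ 0}
        ∈ {t | t ∈ Set.Icc (0:ℝ) t_f ∧ Ψ t ≤ 0} := hZcp.sInf_mem hZne
    have ht₂Z : sSup {t | t ∈ Set.Icc (0:ℝ) t_f ∧ Ψ t ≤ 0}
        ∈ {t | t ∈ Set.Icc (0:ℝ) t_f ∧ Ψ t ≤ 0} := hZcp.sSup_mem hZne
    have ht₁₂ : sInf {t | t ∈ Set.Icc (0:ℝ) t_f ∧ Ψ t ≤ 0}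
        ≤ sSup {t | t ∈ Set.Icc (0:ℝ) t_f ∧ Ψ t ≤ 0} := csInf_le_csSup hZne hbddB hbddA
    have hout : ∀ t ∈ Set.Icc (0:ℝ) t_f,
        (t < sInf {t | t ∈ Set.Icc (0:ℝ) t_f ∧ Ψ t ≤ 0}
          ∨ sSup {t | t ∈ Set.Icc (0:ℝ) t_f ∧ Ψ t ≤ 0} < t) → 0 < Ψ t := by
      intro t ht hside
      by_contra hc
      push_neg at hc
      have htZ : t ∈ {t | t ∈ Set.Icc (0:ℝ) t_f ∧ Ψ t ≤ 0} := ⟨ht, hc⟩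
      rcases hside with h | h
      · exact absurd (csInf_le hbddB htZ) (not_le.2 h)
      · exact absurd (le_csSup hbddA htZ) (not_le.2 h)
    have hin : ∀ t ∈ Set.Ioo (sInf {t | t ∈ Set.Icc (0:ℝ) t_f ∧ Ψ t ≤ 0})
        (sSup {t | t ∈ Set.Icc (0:ℝ) t_f ∧ Ψ t ≤ 0}), Ψ t ≤ 0 := by
      intro w hw
      by_contra hc
      push_neg at hc
      have hwIcc : w ∈ Set.Icc (0:ℝ) t_f := ⟨ht₁Z.1.1.trans hw.1.le, hw.2.le.trans ht₂Z.1.2⟩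
      -- left zero A
      have hS1cp : IsCompact ({t | t ∈ Set.Icc (0:ℝ) t_f ∧ Ψ t ≤ 0} ∩ Set.Iic w) :=
        hZcp.inter_right isClosed_Iic
      have hS1ne : ({t | t ∈ Set.Icc (0:ℝ) t_f ∧ Ψ t ≤ 0} ∩ Set.Iic w).Nonempty :=
        ⟨sInf {t | t ∈ Set.Icc (0:ℝ) t_f ∧ Ψ t ≤ 0}, ht₁Z, hw.1.le⟩
      have hAmem := hS1cp.sSup_mem hS1ne
      obtain ⟨hAZ, hAw⟩ := hAmem
      have hAltw : sSup ({t | t ∈ Set.Icc (0:ℝ) t_f ∧ Ψ t ≤ 0} ∩ Set.Iic w) < w := by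
        rcases lt_or_eq_of_le (Set.mem_Iic.1 hAw) with h | h
        · exact h
        · rw [h] at hAZ
          exact absurd hAZ.2 (not_le.2 hc)
      have hgap1 : ∀ s ∈ Set.Ioc (sSup ({t | t ∈ Set.Icc (0:ℝ) t_f ∧ Ψ t ≤ 0} ∩ Set.Iic w)) w,
          0 < Ψ s := by
        intro s hs
        by_contra hcs
        push_neg at hcs
        have hsZ : s ∈ {t | t ∈ Set.Icc (0:ℝ) t_f ∧ Ψ t ≤ 0} ∩ Set.Iic w :=
          ⟨⟨⟨hAZ.1.1.trans hs.1.le, hs.2.trans hwIcc.2⟩, hcs⟩, hs.2⟩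
        exact absurd (le_csSup hS1cp.bddAbove hsZ) (not_le.2 hs.1)
      have hΨA : Ψ (sSup ({t | t ∈ Set.Icc (0:ℝ) t_f ∧ Ψ t ≤ 0} ∩ Set.Iic w)) = 0 := by
        refine le_antisymm hAZ.2 ?_
        have hcw : ContinuousWithinAt Ψ
            (Set.Ioc (sSup ({t | t ∈ Set.Icc (0:ℝ) t_f ∧ Ψ t ≤ 0} ∩ Set.Iic w)) w)
            (sSup ({t | t ∈ Set.Icc (0:ℝ) t_f ∧ Ψ t ≤ 0} ∩ Set.Iic w)) := by
          refine (hΨcont _ hAZ.1).mono ?_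
          intro s hs
          exact ⟨hAZ.1.1.trans hs.1.le, hs.2.trans hwIcc.2⟩
        haveI hne : (𝓝[Set.Ioc (sSup ({t | t ∈ Set.Icc (0:ℝ) t_f ∧ Ψ t ≤ 0} ∩ Set.Iic w)) w]
            (sSup ({t | t ∈ Set.Icc (0:ℝ) t_f ∧ Ψ t ≤ 0} ∩ Set.Iic w))).NeBot := by
          rw [nhdsWithin_Ioc_eq_nhdsGT hAltw]
          infer_instance
        refine ge_of_tendsto hcw ?_
        filter_upwards [self_mem_nhdsWithin] with s hs
        exact (hgap1 s hs).le
      -- right zero B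
      have hS2cp : IsCompact ({t | t ∈ Set.Icc (0:ℝ) t_f ∧ Ψ t ≤ 0} ∩ Set.Ici w) :=
        hZcp.inter_right isClosed_Ici
      have hS2ne : ({t | t ∈ Set.Icc (0:ℝ) t_f ∧ Ψ t ≤ 0} ∩ Set.Ici w).Nonempty :=
        ⟨sSup {t | t ∈ Set.Icc (0:ℝ) t_f ∧ Ψ t ≤ 0}, ht₂Z, hw.2.le⟩
      have hBmem := hS2cp.sInf_mem hS2ne
      obtain ⟨hBZ, hBw⟩ := hBmem
      have hwltB : w < sInf ({t | t ∈ Set.Icc (0:ℝ) t_f ∧ Ψ t ≤ 0} ∩ Set.Ici w) := by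
        rcases lt_or_eq_of_le (Set.mem_Ici.1 hBw) with h | h
        · exact h
        · rw [← h] at hBZ
          exact absurd hBZ.2 (not_le.2 hc)
      have hgap2 : ∀ s ∈ Set.Ico w (sInf ({t | t ∈ Set.Icc (0:ℝ) t_f ∧ Ψ t ≤ 0} ∩ Set.Ici w)),
          0 < Ψ s := by
        intro s hs
        by_contra hcs
        push_neg at hcs
        have hsZ : s ∈ {t | t ∈ Set.Icc (0:ℝ) t_f ∧ Ψ t ≤ 0} ∩ Set.Ici w :=
          ⟨⟨⟨hwIcc.1.trans hs.1, (hs.2.le.trans hBZ.1.2)⟩, hcs⟩, hs.1⟩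
        exact absurd (csInf_le hS2cp.bddBelow hsZ) (not_le.2 hs.2)
      have hΨB : Ψ (sInf ({t | t ∈ Set.Icc (0:ℝ) t_f ∧ Ψ t ≤ 0} ∩ Set.Ici w)) = 0 := by
        refine le_antisymm hBZ.2 ?_
        have hcw : ContinuousWithinAt Ψ
            (Set.Ico w (sInf ({t | t ∈ Set.Icc (0:ℝ) t_f ∧ Ψ t ≤ 0} ∩ Set.Ici w)))
            (sInf ({t | t ∈ Set.Icc (0:ℝ) t_f ∧ Ψ t ≤ 0} ∩ Set.Ici w)) := by
          refine (hΨcont _ hBZ.1).mono ?_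
          intro s hs
          exact ⟨hwIcc.1.trans hs.1, hs.2.le.trans hBZ.1.2⟩
        haveI hne : (𝓝[Set.Ico w (sInf ({t | t ∈ Set.Icc (0:ℝ) t_f ∧ Ψ t ≤ 0} ∩ Set.Ici w))]
            (sInf ({t | t ∈ Set.Icc (0:ℝ) t_f ∧ Ψ t ≤ 0} ∩ Set.Ici w))).NeBot := by
          rw [nhdsWithin_Ico_eq_nhdsLT hwltB]
          infer_instance
        refine ge_of_tendsto hcw ?_
        filter_upwards [self_mem_nhdsWithin] with s hs
        exact (hgap2 s hs).le
      -- apply the bump lemma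
      refine bump (sSup ({t | t ∈ Set.Icc (0:ℝ) t_f ∧ Ψ t ≤ 0} ∩ Set.Iic w))
        (sInf ({t | t ∈ Set.Icc (0:ℝ) t_f ∧ Ψ t ≤ 0} ∩ Set.Ici w))
        hAZ.1.1 (hAltw.trans hwltB) hBZ.1.2 hΨA hΨB ?_
      intro s hs
      rcases le_or_gt s w with h | h
      · exact hgap1 s ⟨hs.1, h⟩
      · exact hgap2 s ⟨h.le, hs.2⟩
    refine ⟨sInf {t | t ∈ Set.Icc (0:ℝ) t_f ∧ Ψ t ≤ 0},
      sSup {t | t ∈ Set.Icc (0:ℝ) t_f ∧ Ψ t ≤ 0}, ht₁Z.1.1, ht₁₂, ht₂Z.1.2, ?_, ?_⟩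
    · filter_upwards [hctl] with t hct ht hside
      exact ((hct ht).1 (hout t ht hside)).1
    · filter_upwards [hctl] with t hct ht
      have htIcc : t ∈ Set.Icc (0:ℝ) t_f := ⟨ht₁Z.1.1.trans ht.1.le, ht.2.le.trans ht₂Z.1.2⟩
      rcases lt_or_eq_of_le (hin t ht) with h | h
      · exact Or.inl ((hct htIcc).2 h)
      · refine Or.inr ?_
        rw [hΨeq t htIcc]
        exact h
  · -- Z empty : Ψ > 0 everywhere, full max arc
    push_neg at hZ
    refine ⟨t_f, t_f, htf.le, le_refl _, le_refl _, ?_, ?_⟩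
    · filter_upwards [hctl] with t hct ht _
      exact ((hct ht).1 (hZ t ht)).1
    · filter_upwards with t ht
      exact absurd (ht.1.trans ht.2) (lt_irrefl _)
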